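/- Let ω = (τ₁; τ₂) with τ₁, τ₂ n×n partial permutation matrices and ω of rank n, and suppose ξ₁, ξ₂ are partial permutation matrices with (ξ₁;ξ₂) of rank n, g = [[τ₁,ξ₁],[τ₂,−ξ₂]] invertible, and ξ₁ᵀτ₁ − ξ₂ᵀτ₂ = 0. Then with σ(g) = Jₙ⁻¹(gᵀ)⁻¹Jₙ one has σ(g) = [[ξ₂,τ₂],[ξ₁,−τ₁]] · diag(−d₂⁻¹, −d₁⁻¹), where d₁ = τ₁ᵀτ₁+τ₂ᵀτ₂ and d₂ = ξ₁ᵀξ₁+ξ₂ᵀξ₂. In particular, the column span of the first n columns of σ(g) equals the column span of the 2n×n matrix (ξ₂; ξ₁). -/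

import Mathlib

open Matrix

def IsPartialPerm {n : ℕ} (τ : Matrix (Fin n) (Fin n) ℂ) : Prop :=
  (∀ i j, τ i j = 0 ∨ τ i j = 1) ∧
  (∀ i j j', τ i j = 1 → τ i j' = 1 → j = j') ∧
  (∀ i i' j, τ i j = 1 → τ i' j = 1 → i = i')

def Jmat (n : ℕ) : Matrix (Fin n ⊕ Fin n) (Fin n ⊕ Fin n) ℂ :=
  Matrix.fromBlocks 0 (-1) 1 0

noncomputable def sigmaMap (n : ℕ) (g : Matrix (Fin n ⊕ Fin n) (Fin n ⊕ Fin n) ℂ) :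
    Matrix (Fin n ⊕ Fin n) (Fin n ⊕ Fin n) ℂ :=
  (Jmat n)⁻¹ * (gᵀ)⁻¹ * Jmat n

/-! Write d₁ = τ₁ᵀτ₁ + τ₂ᵀτ₂ and d₂ = ξ₁ᵀξ₁ + ξ₂ᵀξ₂. Partial permutation matrices are real, so
d₁ = ωᴴω has the rank n of ω and is invertible, and likewise d₂. The orthogonality relation makes
gᵀ J [[ξ₂, τ₂], [ξ₁, −τ₁]] block antidiagonal with blocks d₁ and −d₂, so multiplying on the right
by diag(−d₂⁻¹, −d₁⁻¹) gives J; this says exactly that the claimed matrix is J⁻¹(gᵀ)⁻¹J. Its first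
n columns are (ξ₂; ξ₁)(−d₂⁻¹), which span the same space as (ξ₂; ξ₁). -/

namespace Matrix

variable {m n K : Type*} [Fintype m] [Field K]

theorem isUnit_of_rank_eq_card [DecidableEq m] {A : Matrix m m K}
    (h : A.rank = Fintype.card m) : IsUnit A := by
  rw [← mulVec_surjective_iff_isUnit]
  change Function.Surjective A.mulVecLin
  rw [← LinearMap.range_eq_top]
  apply Submodule.eq_top_of_finrank_eq
  rw [← rank, h, Module.finrank_fintype_fun_eq_card]

theorem isUnit_conjTranspose_mul_self_of_rank_eq_card [Fintype n] [DecidableEq n]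
    [PartialOrder K] [StarRing K] [StarOrderedRing K] {A : Matrix m n K}
    (h : A.rank = Fintype.card n) : IsUnit (Aᴴ * A) :=
  isUnit_of_rank_eq_card (by rw [rank_conjTranspose_mul_self, h])

theorem span_range_col_mul_of_isUnit [DecidableEq m] {R : Type*} [CommRing R]
    (A : Matrix n m R) {B : Matrix m m R} (hB : IsUnit B) :
    Submodule.span R (Set.range (A * B).col) = Submodule.span R (Set.range A.col) := by
  have hB_surj : LinearMap.range B.mulVecLin = ⊤ :=
    LinearMap.range_eq_top.mpr (mulVec_surjective_iff_isUnit.mpr hB)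
  rw [← range_mulVecLin, ← range_mulVecLin, mulVecLin_mul,
    LinearMap.range_comp_of_range_eq_top _ hB_surj]

end Matrix

theorem IsPartialPerm.conjTranspose_eq_transpose {n : ℕ} {τ : Matrix (Fin n) (Fin n) ℂ}
    (hτ : IsPartialPerm τ) : τᴴ = τᵀ := by
  ext i j
  rcases hτ.1 j i with h | h <;> simp [h]

open scoped ComplexOrder in
theorem isUnit_gram_of_rank_fromRows {n : ℕ} {τ₁ τ₂ : Matrix (Fin n) (Fin n) ℂ}
    (hτ₁ : IsPartialPerm τ₁) (hτ₂ : IsPartialPerm τ₂) (hrank : (fromRows τ₁ τ₂).rank = n) :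
    IsUnit (τ₁ᵀ * τ₁ + τ₂ᵀ * τ₂) := by
  have := isUnit_conjTranspose_mul_self_of_rank_eq_card (hrank.trans (Fintype.card_fin n).symm)
  rwa [conjTranspose_fromRows_eq_fromCols_conjTranspose, fromCols_mul_fromRows,
    hτ₁.conjTranspose_eq_transpose, hτ₂.conjTranspose_eq_transpose] at this

theorem Jmat_mul_Jmat (n : ℕ) : Jmat n * Jmat n = -1 := by
  simp [Jmat, fromBlocks_multiply, ← fromBlocks_one, fromBlocks_neg]

theorem sigmaMap_eq_of_transpose_mul_Jmat_mul {n : ℕ}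
    {g S : Matrix (Fin n ⊕ Fin n) (Fin n ⊕ Fin n) ℂ} (h : gᵀ * Jmat n * S = Jmat n) :
    sigmaMap n g = S := by
  have hJinv : (Jmat n)⁻¹ = -Jmat n :=
    inv_eq_left_inv (by rw [Matrix.neg_mul, Jmat_mul_Jmat, neg_neg])
  have hg : (gᵀ)⁻¹ = -(Jmat n * S * Jmat n) :=
    inv_eq_right_inv (by rw [Matrix.mul_neg, ← Matrix.mul_assoc, ← Matrix.mul_assoc, h,
      Jmat_mul_Jmat, neg_neg])
  calc sigmaMap n g = Jmat n * Jmat n * S * (Jmat n * Jmat n) := by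
        rw [sigmaMap, hg, hJinv]; noncomm_ring
    _ = S := by rw [Jmat_mul_Jmat]; simp

theorem transpose_mul_Jmat_mul_fromBlocks {n : ℕ} {τ₁ τ₂ ξ₁ ξ₂ : Matrix (Fin n) (Fin n) ℂ}
    (horth : ξ₁ᵀ * τ₁ - ξ₂ᵀ * τ₂ = 0) :
    (fromBlocks τ₁ ξ₁ τ₂ (-ξ₂))ᵀ * Jmat n * fromBlocks ξ₂ τ₂ ξ₁ (-τ₁) =
      fromBlocks 0 (τ₁ᵀ * τ₁ + τ₂ᵀ * τ₂) (-(ξ₁ᵀ * ξ₁ + ξ₂ᵀ * ξ₂)) 0 := by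
  have horth' : τ₁ᵀ * ξ₁ - τ₂ᵀ * ξ₂ = 0 := by
    simpa [transpose_sub, transpose_mul] using congrArg transpose horth
  simp only [Jmat, fromBlocks_transpose, fromBlocks_multiply, transpose_neg, Matrix.mul_zero, Matrix.mul_one, Matrix.mul_neg, Matrix.neg_mul,
    add_zero, zero_add, neg_neg]
  congr 1
  · rw [← sub_eq_add_neg, ← neg_sub, horth', neg_zero]
  · abel
  · abel
  · rw [neg_add_eq_sub, horth]

theorem sigmaMap_fromBlocks {n : ℕ} {τ₁ τ₂ ξ₁ ξ₂ : Matrix (Fin n) (Fin n) ℂ}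
    (horth : ξ₁ᵀ * τ₁ - ξ₂ᵀ * τ₂ = 0) (hd₁ : IsUnit (τ₁ᵀ * τ₁ + τ₂ᵀ * τ₂))
    (hd₂ : IsUnit (ξ₁ᵀ * ξ₁ + ξ₂ᵀ * ξ₂)) :
    sigmaMap n (fromBlocks τ₁ ξ₁ τ₂ (-ξ₂)) = fromBlocks ξ₂ τ₂ ξ₁ (-τ₁) *
      fromBlocks (-(ξ₁ᵀ * ξ₁ + ξ₂ᵀ * ξ₂)⁻¹) 0 0 (-(τ₁ᵀ * τ₁ + τ₂ᵀ * τ₂)⁻¹) := by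
  apply sigmaMap_eq_of_transpose_mul_Jmat_mul
  rw [← Matrix.mul_assoc, transpose_mul_Jmat_mul_fromBlocks horth, fromBlocks_multiply]
  simp only [Matrix.zero_mul, Matrix.mul_zero, add_zero, zero_add, neg_zero, Matrix.mul_neg,
    Matrix.neg_mul, neg_neg, mul_nonsing_inv _ ((isUnit_iff_isUnit_det _).mp hd₁),
    mul_nonsing_inv _ ((isUnit_iff_isUnit_det _).mp hd₂)]
  rfl

theorem sigma_of_block_representative_general {n : ℕ}
    (τ₁ τ₂ ξ₁ ξ₂ : Matrix (Fin n) (Fin n) ℂ)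
    (hτ₁ : IsPartialPerm τ₁) (hτ₂ : IsPartialPerm τ₂)
    (hξ₁ : IsPartialPerm ξ₁) (hξ₂ : IsPartialPerm ξ₂)
    (hrankτ : (Matrix.fromRows τ₁ τ₂).rank = n)
    (hrankξ : (Matrix.fromRows ξ₁ ξ₂).rank = n)
    (horth : ξ₁ᵀ * τ₁ - ξ₂ᵀ * τ₂ = 0) :
    sigmaMap n (Matrix.fromBlocks τ₁ ξ₁ τ₂ (-ξ₂)) =
        Matrix.fromBlocks ξ₂ τ₂ ξ₁ (-τ₁) *
          Matrix.fromBlocks (-(ξ₁ᵀ * ξ₁ + ξ₂ᵀ * ξ₂)⁻¹) 0 0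
            (-(τ₁ᵀ * τ₁ + τ₂ᵀ * τ₂)⁻¹) ∧
      Submodule.span ℂ (Set.range fun j : Fin n =>
          fun i => sigmaMap n (Matrix.fromBlocks τ₁ ξ₁ τ₂ (-ξ₂)) i (Sum.inl j)) =
        Submodule.span ℂ (Set.range fun j : Fin n =>
          fun i => Matrix.fromRows ξ₂ ξ₁ i j) := by
  have hd₁ := isUnit_gram_of_rank_fromRows hτ₁ hτ₂ hrankτ
  have hd₂ := isUnit_gram_of_rank_fromRows hξ₁ hξ₂ hrankξ
  have hσ := sigmaMap_fromBlocks horth hd₁ hd₂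
  refine ⟨hσ, ?_⟩
  have hcols : (fun j i => sigmaMap n (fromBlocks τ₁ ξ₁ τ₂ (-ξ₂)) i (Sum.inl j)) =
      (fromRows ξ₂ ξ₁ * -(ξ₁ᵀ * ξ₁ + ξ₂ᵀ * ξ₂)⁻¹).col := by
    rw [hσ, ← fromCols_fromRows_eq_fromBlocks, fromCols_mul_fromBlocks]
    simp only [Matrix.mul_zero, add_zero, fromCols_apply_inl]
    rfl
  rw [hcols, span_range_col_mul_of_isUnit _ (isUnit_nonsing_inv_iff.mpr hd₂).neg]
  rfl

theorem sigma_of_block_representative {n : ℕ}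
    (τ₁ τ₂ ξ₁ ξ₂ : Matrix (Fin n) (Fin n) ℂ)
    (hτ₁ : IsPartialPerm τ₁) (hτ₂ : IsPartialPerm τ₂)
    (hξ₁ : IsPartialPerm ξ₁) (hξ₂ : IsPartialPerm ξ₂)
    (hrankτ : (Matrix.fromRows τ₁ τ₂).rank = n)
    (hrankξ : (Matrix.fromRows ξ₁ ξ₂).rank = n)
    (hg : IsUnit (Matrix.fromBlocks τ₁ ξ₁ τ₂ (-ξ₂)))
    (horth : ξ₁ᵀ * τ₁ - ξ₂ᵀ * τ₂ = 0) :
    sigmaMap n (Matrix.fromBlocks τ₁ ξ₁ τ₂ (-ξ₂)) =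
        Matrix.fromBlocks ξ₂ τ₂ ξ₁ (-τ₁) *
          Matrix.fromBlocks (-(ξ₁ᵀ * ξ₁ + ξ₂ᵀ * ξ₂)⁻¹) 0 0
            (-(τ₁ᵀ * τ₁ + τ₂ᵀ * τ₂)⁻¹) ∧
      Submodule.span ℂ (Set.range fun j : Fin n =>
          fun i => sigmaMap n (Matrix.fromBlocks τ₁ ξ₁ τ₂ (-ξ₂)) i (Sum.inl j)) =
        Submodule.span ℂ (Set.range fun j : Fin n =>
          fun i => Matrix.fromRows ξ₂ ξ₁ i j) :=
  sigma_of_block_representative_general τ₁ τ₂ ξ₁ ξ₂ hτ₁ hτ₂ hξ₁ hξ₂ hrankτ hrankξ horth
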